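/- Let g ∈ S^30. The function h = max{0, g} (the composition of g with the ReLU function) is H-conforming, i.e., h ∈ S^30, if and only if there is no pair of sets ∅ ⊊ S ⊊ S' ⊊ [4]_0 such that g(r_S) and g(r_{S'}) are both nonzero and have different signs. -/

import Mathlib

open Finset

/-- Extend `x ∈ ℝ⁴` by the coordinate `x₀ = 0`, giving a vector indexed by `[4]₀ = {0,…,4}`. -/
noncomputable def ext (x : Fin 4 → ℝ) : Fin 5 → ℝ := Fin.cases 0 x

/-- The cell `C_π = {x ∈ ℝ⁴ : x_{π(0)} ≤ x_{π(1)} ≤ x_{π(2)} ≤ x_{π(3)} ≤ x_{π(4)}}` of the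
hyperplane arrangement `H` (with the convention `x₀ = 0`). -/
def cell (π : Equiv.Perm (Fin 5)) : Set (Fin 4 → ℝ) :=
  {x | ∀ i : Fin 4, ext x (π i.castSucc) ≤ ext x (π i.succ)}

/-- `g : ℝ⁴ → ℝ` is `H`-conforming: it is a positively homogeneous continuous function that
is linear on each cell `C_π` of the arrangement `H` (hence continuous piecewise linear). -/
def Hconforming (g : (Fin 4 → ℝ) → ℝ) : Prop :=
  Continuous g ∧ (∀ (lam : ℝ), 0 ≤ lam → ∀ x, g (lam • x) = lam * g x) ∧
    ∀ π : Equiv.Perm (Fin 5), ∃ a : Fin 4 → ℝ, ∀ x ∈ cell π, g x = ∑ j, a j * x j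

/-- The generator `r_S` of the ray `R_S`, for `∅ ⊊ S ⊊ [4]₀`: the 0/1 indicator vector of
the complement of `S` if `0 ∈ S`, and the 0/(−1) indicator vector of `S` if `0 ∉ S`. -/
noncomputable def ray (S : Finset (Fin 5)) : Fin 4 → ℝ := fun j =>
  if (0 : Fin 5) ∈ S then (if j.succ ∈ S then 0 else 1) else (if j.succ ∈ S then -1 else 0)

/-!
Each cell `C_π` is the simplicial cone spanned by the rays `r_{S_0}, …, r_{S_3}` of the
flag `S_k = {π 0, …, π k}`: every `x` equals `∑ₖ (x_{π(k+1)} - x_{π(k)}) r_{S_k}`, with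
nonnegative coefficients on `C_π`. So if `g` does not change sign along any flag, it has
constant sign on every cell and `max 0 g` equals `g` or `0` there. Conversely, a chain
`S ⊂ S'` extends to a flag, so `r_S` and `r_{S'}` lie in a common cell; if `g` has opposite
signs at them, it vanishes at a positive combination `z` of them, where linearity of
`max 0 g` on the cell would force `max 0 (g z) > 0`.
-/

lemma sum_castSucc_lt_sub {M : Type*} [AddCommGroup M] {n : ℕ} (f : Fin (n + 1) → M)
    (i : Fin (n + 1)) :
    ∑ k : Fin n with k.castSucc < i, (f k.succ - f k.castSucc) = f i - f 0 := by
  induction i using Fin.cases with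
  | zero => simp
  | succ a =>
    rw [← Fin.sum_Iic_sub a]
    refine Finset.sum_congr ?_ fun _ _ => rfl
    ext k
    simp [Fin.castSucc_lt_succ_iff]

lemma ConvexCone.mul_nonneg_of_max_zero_eqOn {E : Type*} [AddCommGroup E] [Module ℝ E]
    (C : ConvexCone ℝ E) {f L : E →ₗ[ℝ] ℝ} (hL : ∀ x ∈ C, max 0 (f x) = L x) {u v : E}
    (hu : u ∈ C) (hv : v ∈ C) : 0 ≤ f u * f v := by
  wlog huv : f v ≤ f u generalizing u v
  · rw [mul_comm]
    exact this hv hu (le_of_not_ge huv)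
  by_contra hneg
  obtain ⟨hfu, hfv⟩ : 0 < f u ∧ f v < 0 := by constructor <;> nlinarith
  have hz : (-f v) • u + f u • v ∈ C :=
    C.add_mem (C.smul_mem (neg_pos.2 hfv) hu) (C.smul_mem hfu hv)
  have h0 := hL _ hz
  simp only [map_add, map_smul, smul_eq_mul, ← hL u hu, ← hL v hv, max_eq_right hfu.le,
    max_eq_left hfv.le] at h0
  rw [show -f v * f u + f u * f v = 0 by ring, max_self] at h0
  nlinarith

lemma forall_nonneg_or_forall_nonpos_of_mul_nonneg {ι : Type*} [LinearOrder ι] {φ : ι → ℝ}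
    (h : ∀ i j, i < j → 0 ≤ φ i * φ j) : (∀ i, 0 ≤ φ i) ∨ ∀ i, φ i ≤ 0 := by
  by_contra hcon
  push Not at hcon
  obtain ⟨⟨i, hi⟩, j, hj⟩ := hcon
  rcases lt_trichotomy i j with hij | rfl | hij
  · nlinarith [h i j hij]
  · linarith
  · nlinarith [h j i hij]

lemma ext_zero (x : Fin 4 → ℝ) : ext x 0 = 0 := rfl

lemma ext_succ (x : Fin 4 → ℝ) (j : Fin 4) : ext x j.succ = x j := rfl

lemma ext_add (x y : Fin 4 → ℝ) (m : Fin 5) : ext (x + y) m = ext x m + ext y m := by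
  induction m using Fin.cases <;> simp [ext_zero, ext_succ]

lemma ext_smul (c : ℝ) (x : Fin 4 → ℝ) (m : Fin 5) : ext (c • x) m = c * ext x m := by
  induction m using Fin.cases <;> simp [ext_zero, ext_succ]

lemma ext_ray (S : Finset (Fin 5)) (m : Fin 5) :
    ext (ray S) m = (if m ∈ S then 0 else 1) - (if (0 : Fin 5) ∈ S then 0 else 1) := by
  induction m using Fin.cases with
  | zero => rw [ext_zero]; ring
  | succ j => rw [ext_succ, ray]; split_ifs <;> norm_num

def cellCone (π : Equiv.Perm (Fin 5)) : ConvexCone ℝ (Fin 4 → ℝ) where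
  carrier := cell π
  smul_mem' c hc x hx i := by
    simp only [ext_smul]
    exact mul_le_mul_of_nonneg_left (hx i) hc.le
  add_mem' x hx y hy i := by
    simp only [ext_add]
    exact add_le_add (hx i) (hy i)

lemma ray_mem_cell_iff {S : Finset (Fin 5)} {π : Equiv.Perm (Fin 5)} :
    ray S ∈ cell π ↔ ∀ i : Fin 4, π i.succ ∈ S → π i.castSucc ∈ S := by
  refine forall_congr' fun i => ?_
  rw [ext_ray, ext_ray, sub_le_sub_iff_right]
  split_ifs <;> simp_all

lemma exists_ray_mem_cell_of_subset {S S' : Finset (Fin 5)} (h : S ⊆ S') :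
    ∃ π : Equiv.Perm (Fin 5), ray S ∈ cell π ∧ ray S' ∈ cell π := by
  -- sorting by `κ` lists `S` first, then `S' \ S`, then the complement of `S'`
  let κ : Fin 5 → ℕ := fun m => (if m ∈ S then 0 else 1) + (if m ∈ S' then 0 else 1)
  have hκ : ∀ a b, κ a ≤ κ b → (b ∈ S → a ∈ S) ∧ (b ∈ S' → a ∈ S') := by
    intro a b hab
    have := @h a
    have := @h b
    simp only [κ] at hab
    split_ifs at hab <;> first | omega | tauto
  have hsort := Tuple.monotone_sort κ
  exact ⟨Tuple.sort κ, ray_mem_cell_iff.2 fun i => (hκ _ _ (hsort Fin.castSucc_lt_succ.le)).1,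
    ray_mem_cell_iff.2 fun i => (hκ _ _ (hsort Fin.castSucc_lt_succ.le)).2⟩

def initSeg (π : Equiv.Perm (Fin 5)) (k : Fin 4) : Finset (Fin 5) :=
  {m | π.symm m ≤ k.castSucc}

@[simp]
lemma mem_initSeg {π : Equiv.Perm (Fin 5)} {k : Fin 4} {m : Fin 5} :
    m ∈ initSeg π k ↔ π.symm m ≤ k.castSucc := by
  simp [initSeg]

lemma initSeg_nonempty (π : Equiv.Perm (Fin 5)) (k : Fin 4) : (initSeg π k).Nonempty :=
  ⟨π 0, by simp⟩

lemma initSeg_ssubset_initSeg (π : Equiv.Perm (Fin 5)) {k k' : Fin 4} (h : k < k') :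
    initSeg π k ⊂ initSeg π k' := by
  refine Finset.ssubset_iff_of_subset (fun m hm => ?_) |>.2 ⟨π k'.castSucc, by simp, by simpa⟩
  simp only [mem_initSeg] at hm ⊢
  exact hm.trans (Fin.castSucc_le_castSucc_iff.2 h.le)

lemma initSeg_ssubset_univ (π : Equiv.Perm (Fin 5)) (k : Fin 4) : initSeg π k ⊂ univ :=
  Finset.ssubset_univ_iff.2 fun h => by
    have := mem_initSeg.1 (h ▸ Finset.mem_univ (π 4))
    simp only [Equiv.symm_apply_apply, Fin.le_def, Fin.val_castSucc] at this
    omega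

lemma ray_initSeg_mem_cell (π : Equiv.Perm (Fin 5)) (k : Fin 4) : ray (initSeg π k) ∈ cell π :=
  ray_mem_cell_iff.2 fun i hi => by
    simp only [mem_initSeg, Equiv.symm_apply_apply] at hi ⊢
    exact Fin.castSucc_lt_succ.le.trans hi

lemma sum_mul_ite_mem_initSeg (π : Equiv.Perm (Fin 5)) (v : Fin 5 → ℝ) (m : Fin 5) :
    ∑ k, (v (π k.succ) - v (π k.castSucc)) * (if m ∈ initSeg π k then 0 else 1) =
      v m - v (π 0) := by
  simp_rw [mem_initSeg, ← not_lt, ite_not, mul_ite, mul_zero, mul_one]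
  rw [← Finset.sum_filter, sum_castSucc_lt_sub (fun i => v (π i)), Equiv.apply_symm_apply]

lemma sum_smul_ray_initSeg (π : Equiv.Perm (Fin 5)) (x : Fin 4 → ℝ) :
    ∑ k, (ext x (π k.succ) - ext x (π k.castSucc)) • ray (initSeg π k) = x := by
  funext j
  have hray : ∀ S, ray S j = ext (ray S) j.succ := fun _ => rfl
  simp only [Finset.sum_apply, Pi.smul_apply, smul_eq_mul, hray, ext_ray, mul_sub,
    Finset.sum_sub_distrib, sum_mul_ite_mem_initSeg, ext_zero]
  rw [ext_succ]
  ring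

lemma eq_sum_mul_apply_ray_of_mem_cell {g : (Fin 4 → ℝ) → ℝ} {π : Equiv.Perm (Fin 5)}
    {a : Fin 4 → ℝ} (ha : ∀ x ∈ cell π, g x = ∑ j, a j * x j) {x : Fin 4 → ℝ}
    (hx : x ∈ cell π) :
    g x = ∑ k, (ext x (π k.succ) - ext x (π k.castSucc)) * g (ray (initSeg π k)) := by
  have ha' : ∀ y ∈ cell π, g y = a ⬝ᵥ y := ha
  rw [ha' x hx]
  conv_lhs => rw [← sum_smul_ray_initSeg π x]
  simp only [dotProduct_sum, dotProduct_smul, smul_eq_mul, ha' _ (ray_initSeg_mem_cell π _)]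

lemma nonneg_of_mem_cell {g : (Fin 4 → ℝ) → ℝ} {π : Equiv.Perm (Fin 5)} {a : Fin 4 → ℝ}
    (ha : ∀ x ∈ cell π, g x = ∑ j, a j * x j) (h : ∀ k, 0 ≤ g (ray (initSeg π k)))
    {x : Fin 4 → ℝ} (hx : x ∈ cell π) : 0 ≤ g x := by
  rw [eq_sum_mul_apply_ray_of_mem_cell ha hx]
  exact Finset.sum_nonneg fun k _ => mul_nonneg (sub_nonneg.2 (hx k)) (h k)

lemma nonpos_of_mem_cell {g : (Fin 4 → ℝ) → ℝ} {π : Equiv.Perm (Fin 5)} {a : Fin 4 → ℝ}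
    (ha : ∀ x ∈ cell π, g x = ∑ j, a j * x j) (h : ∀ k, g (ray (initSeg π k)) ≤ 0)
    {x : Fin 4 → ℝ} (hx : x ∈ cell π) : g x ≤ 0 := by
  rw [eq_sum_mul_apply_ray_of_mem_cell ha hx]
  exact Finset.sum_nonpos fun k _ => mul_nonpos_of_nonneg_of_nonpos (sub_nonneg.2 (hx k)) (h k)

/-- for `g ∈ S³⁰`, the function `h = max{0, g}` is `H`-conforming (i.e.
`h ∈ S³⁰`) if and only if there is no pair of sets `∅ ⊊ S ⊊ S' ⊊ [4]₀` such that `g(r_S)`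
and `g(r_{S'})` are both nonzero and have different signs. -/
theorem relu_conforming_iff (g : (Fin 4 → ℝ) → ℝ) (hg : Hconforming g) :
    Hconforming (fun x => max 0 (g x)) ↔
      ¬∃ S S' : Finset (Fin 5), S.Nonempty ∧ S ⊂ S' ∧ S' ⊂ Finset.univ ∧
        g (ray S) * g (ray S') < 0 := by
  obtain ⟨hcont, hhom, hlin⟩ := hg
  constructor
  · rintro ⟨-, -, hlin'⟩ ⟨S, S', -, hSS', -, hneg⟩
    obtain ⟨π, hS, hS'⟩ := exists_ray_mem_cell_of_subset hSS'.subset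
    obtain ⟨a, ha⟩ := hlin π
    obtain ⟨b, hb⟩ := hlin' π
    have hmax : ∀ x ∈ cellCone π,
        max 0 (dotProductEquiv ℝ _ a x) = dotProductEquiv ℝ _ b x :=
      fun x hx => (congrArg (max 0) (ha x hx)).symm.trans (hb x hx)
    rw [ha _ hS, ha _ hS'] at hneg
    exact ((cellCone π).mul_nonneg_of_max_zero_eqOn hmax hS hS').not_gt hneg
  · intro hno
    refine ⟨continuous_const.max hcont, fun c hc x => ?_, fun π => ?_⟩
    · change max 0 (g (c • x)) = c * max 0 (g x)
      rw [hhom c hc x, mul_max_of_nonneg _ _ hc, mul_zero]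
    obtain ⟨a, ha⟩ := hlin π
    have hchain : ∀ k k', k < k' → 0 ≤ g (ray (initSeg π k)) * g (ray (initSeg π k')) :=
      fun k k' hkk' => not_lt.1 fun hneg => hno ⟨_, _, initSeg_nonempty π k,
        initSeg_ssubset_initSeg π hkk', initSeg_ssubset_univ π k', hneg⟩
    rcases forall_nonneg_or_forall_nonpos_of_mul_nonneg hchain with hpos | hneg
    · exact ⟨a, fun x hx => (max_eq_right (nonneg_of_mem_cell ha hpos hx)).trans (ha x hx)⟩
    · exact ⟨0, fun x hx => by simpa using max_eq_left (nonpos_of_mem_cell ha hneg hx)⟩
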